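/- Let W ⊆ ℝⁿ be a linear subspace and let [n] = B ∪ N and [n] = B̂ ∪ N̂ be two partitions into disjoint sets. Let ℓ = ℓ_N^W : ℝ^N → ℝ^B and ℓ̂ = ℓ_{N̂}^W : ℝ^{N̂} → ℝ^{B̂} be the corresponding lifting maps. Then σ_i(ℓ) ≥ σ_{i + |N Δ N̂|}(ℓ̂) for every i ≥ 1, where N Δ N̂ = (N \ N̂) ∪ (N̂ \ N) is the symmetric difference and σ_k denotes the k-th largest singular value, with the convention that σ_k of a map is 0 whenever k exceeds its rank (in particular whenever k exceeds the dimension of its domain). -/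

import Mathlib

open scoped RealInnerProductSpace

/-- The coordinate projection `π_I : ℝⁿ → ℝ^I` as a linear map. -/
noncomputable def coordRestrict {n : ℕ} (I : Finset (Fin n)) :
    EuclideanSpace ℝ (Fin n) →ₗ[ℝ] EuclideanSpace ℝ {i : Fin n // i ∈ I} where
  toFun x := WithLp.toLp 2 (fun i => x i.1)
  map_add' _ _ := rfl
  map_smul' _ _ := rfl

/-- `L` is the lifting map `L_I^W : ℝ^I → W`: for every `x`, `L x` is the minimum-norm
element of `{w ∈ W : w_I = Π_{π_I(W)}(x)}` (equivalently, of
`{w ∈ W : w_I - x ∈ (π_I(W))ᗮ}`). -/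
def IsLiftingMap {n : ℕ} (I : Finset (Fin n)) (W : Submodule ℝ (EuclideanSpace ℝ (Fin n)))
    (L : EuclideanSpace ℝ {i : Fin n // i ∈ I} →ₗ[ℝ] EuclideanSpace ℝ (Fin n)) : Prop :=
  ∀ x, (L x ∈ W ∧ coordRestrict I (L x) - x ∈ (W.map (coordRestrict I))ᗮ) ∧
    ∀ w ∈ W, coordRestrict I w - x ∈ (W.map (coordRestrict I))ᗮ → ‖L x‖ ≤ ‖w‖

/-- The `k`-th largest singular value of a linear map between finite-dimensional
normed spaces, via the Courant–Fischer characterization, with the convention that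
it is `0` when `k` exceeds the dimension of the domain (in particular it is `0`
whenever `k` exceeds the rank). -/
noncomputable def singularValue {E F : Type*} [NormedAddCommGroup E] [NormedAddCommGroup F]
    [Module ℝ E] [Module ℝ F] (M : E →ₗ[ℝ] F) (k : ℕ) : ℝ :=
  if k ≤ Module.finrank ℝ E then
    sInf {t : ℝ | ∃ S : Submodule ℝ E,
      Module.finrank ℝ S = Module.finrank ℝ E - k + 1 ∧
      t = sSup {r : ℝ | ∃ u ∈ S, u ≠ 0 ∧ r = ‖M u‖ / ‖u‖}}
  else 0

/-!
Take a Courant–Fischer competitor `S ⊆ ℝ^N` for `σ_k(ℓ)`. Lift `S ∩ π_N(W)` injectively into `W`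
by `L`, keep the lifts vanishing on `N \ N'` (losing at most `|N \ N'|` dimensions) and project
them injectively to `ℝ^{N'}`. Adding `π_{N'}(W)ᗮ`, which `ℓ'` kills, yields a competitor for
`σ_{k + |N Δ N'|}(ℓ')`, since `dim π_{N'}(W) ≤ dim π_N(W) + |N' \ N|`. On it `ℓ'` stretches no more
than `ℓ` does on `S`: a lift `w` satisfies `‖w_{B'}‖² = ‖w_B‖² + ‖w_N‖² - ‖w_{N'}‖²` with
`‖w_N‖ ≤ ‖w_{N'}‖`, and `L'` minimises the `B'`-part among points of `W` with the same
`N'`-coordinates.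
-/

open Module Finset

section LinearAlgebra

variable {K V F : Type*} [DivisionRing K] [AddCommGroup V] [Module K V]
  [AddCommGroup F] [Module K F] [FiniteDimensional K V]

theorem Submodule.finrank_map_add_finrank_inf_ker (p : Submodule K V) (f : V →ₗ[K] F) :
    finrank K (p.map f) + finrank K ↥(p ⊓ LinearMap.ker f) = finrank K p := by
  have h := (f.domRestrict p).finrank_range_add_finrank_ker
  rwa [LinearMap.range_domRestrict, LinearMap.ker_domRestrict,
    ← Submodule.finrank_map_subtype_eq p (Submodule.comap p.subtype (LinearMap.ker f)),
    Submodule.map_comap_subtype] at h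

theorem Submodule.finrank_le_finrank_inf_ker_add [FiniteDimensional K F]
    (p : Submodule K V) (f : V →ₗ[K] F) :
    finrank K p ≤ finrank K ↥(p ⊓ LinearMap.ker f) + finrank K F := by
  have := p.finrank_map_add_finrank_inf_ker f
  have := (p.map f).finrank_le
  omega

theorem Submodule.finrank_map_eq_of_inf_ker_eq_bot {p : Submodule K V} {f : V →ₗ[K] F}
    (h : p ⊓ LinearMap.ker f = ⊥) : finrank K (p.map f) = finrank K p := by
  have := p.finrank_map_add_finrank_inf_ker f
  rwa [h, finrank_bot, add_zero] at this

theorem Submodule.exists_le_finrank_eq (p : Submodule K V) {m : ℕ} (h : m ≤ finrank K p) :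
    ∃ q ≤ p, finrank K q = m := by
  let b := finBasis K p
  refine ⟨(span K (Set.range (b ∘ Fin.castLE h))).map p.subtype, map_subtype_le _ _, ?_⟩
  rw [finrank_map_subtype_eq,
    finrank_span_eq_card (b.linearIndependent.comp _ (Fin.castLE_injective h))]
  simp

end LinearAlgebra

section SingularValue

variable {E F : Type*} [NormedAddCommGroup E] [NormedAddCommGroup F]

section

variable [Module ℝ E] [Module ℝ F]

noncomputable def maxStretch (M : E →ₗ[ℝ] F) (S : Submodule ℝ E) : ℝ :=
  sSup {r : ℝ | ∃ u ∈ S, u ≠ 0 ∧ r = ‖M u‖ / ‖u‖}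

theorem singularValue_eq_sInf (M : E →ₗ[ℝ] F) {k : ℕ} (hk : k ≤ finrank ℝ E) :
    singularValue M k = sInf {t : ℝ | ∃ S : Submodule ℝ E,
      finrank ℝ S = finrank ℝ E - k + 1 ∧ t = maxStretch M S} :=
  if_pos hk

theorem singularValue_of_finrank_lt (M : E →ₗ[ℝ] F) {k : ℕ} (hk : finrank ℝ E < k) :
    singularValue M k = 0 :=
  if_neg (by omega)

theorem maxStretch_nonneg (M : E →ₗ[ℝ] F) (S : Submodule ℝ E) : 0 ≤ maxStretch M S :=
  Real.sSup_nonneg (by rintro r ⟨u, -, -, rfl⟩; positivity)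

theorem maxStretch_le {M : E →ₗ[ℝ] F} {S : Submodule ℝ E} {a : ℝ} (ha : 0 ≤ a)
    (h : ∀ u ∈ S, ‖M u‖ ≤ a * ‖u‖) : maxStretch M S ≤ a := by
  refine Real.sSup_le ?_ ha
  rintro r ⟨u, hu, hu0, rfl⟩
  rw [div_le_iff₀ (norm_pos_iff.mpr hu0)]
  exact h u hu

theorem singularValue_nonneg (M : E →ₗ[ℝ] F) (k : ℕ) : 0 ≤ singularValue M k := by
  rcases le_or_gt k (finrank ℝ E) with hk | hk
  · rw [singularValue_eq_sInf M hk]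
    exact Real.sInf_nonneg (by rintro t ⟨S, -, rfl⟩; exact maxStretch_nonneg M S)
  · rw [singularValue_of_finrank_lt M hk]

end

variable [NormedSpace ℝ E] [NormedSpace ℝ F] [FiniteDimensional ℝ E]

theorem norm_apply_le_maxStretch_mul (M : E →ₗ[ℝ] F) {S : Submodule ℝ E} {u : E}
    (hu : u ∈ S) : ‖M u‖ ≤ maxStretch M S * ‖u‖ := by
  rcases eq_or_ne u 0 with rfl | hu0
  · simp
  have hbdd : BddAbove {r : ℝ | ∃ u ∈ S, u ≠ 0 ∧ r = ‖M u‖ / ‖u‖} := by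
    refine ⟨‖LinearMap.toContinuousLinearMap M‖, ?_⟩
    rintro r ⟨v, -, hv, rfl⟩
    rw [div_le_iff₀ (norm_pos_iff.mpr hv)]
    exact (LinearMap.toContinuousLinearMap M).le_opNorm v
  rw [← div_le_iff₀ (norm_pos_iff.mpr hu0)]
  exact le_csSup hbdd ⟨u, hu, hu0, rfl⟩

theorem singularValue_le_singularValue_of_forall_exists {E' F' : Type*}
    [NormedAddCommGroup E'] [NormedSpace ℝ E'] [NormedAddCommGroup F'] [NormedSpace ℝ F']
    (M : E →ₗ[ℝ] F) (M' : E' →ₗ[ℝ] F') {k k' : ℕ}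
    (hk : 1 ≤ k) (hkE : k ≤ finrank ℝ E) (hk'E' : k' ≤ finrank ℝ E')
    (H : ∀ S : Submodule ℝ E, finrank ℝ S = finrank ℝ E - k + 1 →
      ∃ S' : Submodule ℝ E', finrank ℝ S' = finrank ℝ E' - k' + 1 ∧
        ∀ a : ℝ, 0 ≤ a → (∀ u ∈ S, ‖M u‖ ≤ a * ‖u‖) → ∀ u ∈ S', ‖M' u‖ ≤ a * ‖u‖) :
    singularValue M' k' ≤ singularValue M k := by
  rw [singularValue_eq_sInf M hkE, singularValue_eq_sInf M' hk'E']
  apply le_csInf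
  · obtain ⟨S, -, hS⟩ := (⊤ : Submodule ℝ E).exists_le_finrank_eq
      (m := finrank ℝ E - k + 1) (by rw [finrank_top]; omega)
    exact ⟨_, S, hS, rfl⟩
  rintro _ ⟨S, hS, rfl⟩
  obtain ⟨S', hS', hstretch⟩ := H S hS
  have hbdd : BddBelow {t : ℝ | ∃ S : Submodule ℝ E',
      finrank ℝ S = finrank ℝ E' - k' + 1 ∧ t = maxStretch M' S} :=
    ⟨0, by rintro _ ⟨S, -, rfl⟩; exact maxStretch_nonneg M' S⟩
  exact (csInf_le hbdd ⟨S', hS', rfl⟩).trans <| maxStretch_le (maxStretch_nonneg M S) <|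
    hstretch _ (maxStretch_nonneg M S) fun u hu => norm_apply_le_maxStretch_mul M hu

end SingularValue

section Coordinates

variable {n : ℕ}

theorem finrank_euclideanSpace_finset (I : Finset (Fin n)) :
    finrank ℝ (EuclideanSpace ℝ {i : Fin n // i ∈ I}) = #I := by
  simp

theorem norm_coordRestrict_sq (I : Finset (Fin n)) (v : EuclideanSpace ℝ (Fin n)) :
    ‖coordRestrict I v‖ ^ 2 = ∑ i ∈ I, v i ^ 2 := by
  rw [EuclideanSpace.norm_sq_eq, ← Finset.sum_coe_sort I]
  simp only [Real.norm_eq_abs, sq_abs]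
  rfl

theorem norm_sq_eq_norm_coordRestrict_sq_add {B N : Finset (Fin n)} (hBN : B ∪ N = univ)
    (hdisj : Disjoint B N) (v : EuclideanSpace ℝ (Fin n)) :
    ‖v‖ ^ 2 = ‖coordRestrict B v‖ ^ 2 + ‖coordRestrict N v‖ ^ 2 := by
  rw [EuclideanSpace.norm_sq_eq, norm_coordRestrict_sq, norm_coordRestrict_sq,
    ← sum_union hdisj, hBN]
  simp only [Real.norm_eq_abs, sq_abs]

theorem coordRestrict_eq_zero_iff {I : Finset (Fin n)} {v : EuclideanSpace ℝ (Fin n)} :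
    coordRestrict I v = 0 ↔ ∀ i ∈ I, v i = 0 := by
  constructor
  · intro h i hi
    exact congrArg (fun f : EuclideanSpace ℝ {i : Fin n // i ∈ I} => f ⟨i, hi⟩) h
  · intro h
    ext i
    exact h i.1 i.2

theorem coordRestrict_eq_zero_of_sdiff {I J : Finset (Fin n)} {v : EuclideanSpace ℝ (Fin n)}
    (hIJ : coordRestrict (I \ J) v = 0) (hJ : coordRestrict J v = 0) :
    coordRestrict I v = 0 := by
  rw [coordRestrict_eq_zero_iff] at hIJ hJ ⊢
  intro i hi
  by_cases hiJ : i ∈ J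
  · exact hJ i hiJ
  · exact hIJ i (mem_sdiff.mpr ⟨hi, hiJ⟩)

theorem norm_coordRestrict_sq_le_of_sdiff {I J : Finset (Fin n)} {v : EuclideanSpace ℝ (Fin n)}
    (h : coordRestrict (I \ J) v = 0) : ‖coordRestrict I v‖ ^ 2 ≤ ‖coordRestrict J v‖ ^ 2 := by
  rw [norm_coordRestrict_sq, norm_coordRestrict_sq, ← sum_sdiff (inter_subset_left (s₂ := J)),
    sdiff_inter_self_left, sum_eq_zero fun i hi => by rw [coordRestrict_eq_zero_iff.mp h i hi,
      sq, mul_zero], zero_add]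
  exact sum_le_sum_of_subset_of_nonneg inter_subset_right fun i _ _ => sq_nonneg _

theorem finrank_map_coordRestrict_le (W : Submodule ℝ (EuclideanSpace ℝ (Fin n)))
    (I J : Finset (Fin n)) :
    finrank ℝ (W.map (coordRestrict J)) ≤ finrank ℝ (W.map (coordRestrict I)) + #(J \ I) := by
  have hI := W.finrank_map_add_finrank_inf_ker (coordRestrict I)
  have hJ := W.finrank_map_add_finrank_inf_ker (coordRestrict J)
  have hker := (W ⊓ LinearMap.ker (coordRestrict I)).finrank_le_finrank_inf_ker_add
    (coordRestrict (J \ I))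
  have hle : W ⊓ LinearMap.ker (coordRestrict I) ⊓ LinearMap.ker (coordRestrict (J \ I)) ≤
      W ⊓ LinearMap.ker (coordRestrict J) := by
    rintro w ⟨⟨hwW, hwI⟩, hwJI⟩
    exact ⟨hwW, coordRestrict_eq_zero_of_sdiff hwJI hwI⟩
  have := Submodule.finrank_mono hle
  rw [finrank_euclideanSpace_finset] at hker
  omega

theorem norm_coordRestrict_le_of_partitions {B N B' N' : Finset (Fin n)}
    (hBN : B ∪ N = univ) (hdisj : Disjoint B N) (hBN' : B' ∪ N' = univ)
    (hdisj' : Disjoint B' N') {w : EuclideanSpace ℝ (Fin n)} {a : ℝ} (ha : 0 ≤ a)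
    (hB : ‖coordRestrict B w‖ ≤ a * ‖coordRestrict N w‖) (hN : coordRestrict (N \ N') w = 0) :
    ‖coordRestrict B' w‖ ≤ a * ‖coordRestrict N' w‖ := by
  have hsplit := norm_sq_eq_norm_coordRestrict_sq_add hBN hdisj w
  have hsplit' := norm_sq_eq_norm_coordRestrict_sq_add hBN' hdisj' w
  have hNN' := norm_coordRestrict_sq_le_of_sdiff hN
  have hB2 := pow_le_pow_left₀ (norm_nonneg _) hB 2
  rw [← pow_le_pow_iff_left₀ (norm_nonneg _) (by positivity) two_ne_zero]
  -- `‖w_{B'}‖² = ‖w_B‖² + ‖w_N‖² - ‖w_{N'}‖² ≤ a² ‖w_N‖² ≤ a² ‖w_{N'}‖²`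
  nlinarith [sq_nonneg a]

end Coordinates

namespace IsLiftingMap

variable {n : ℕ} {I : Finset (Fin n)} {W : Submodule ℝ (EuclideanSpace ℝ (Fin n))}
  {L : EuclideanSpace ℝ {i : Fin n // i ∈ I} →ₗ[ℝ] EuclideanSpace ℝ (Fin n)}

theorem mem (hL : IsLiftingMap I W L) (x : EuclideanSpace ℝ {i : Fin n // i ∈ I}) : L x ∈ W :=
  (hL x).1.1

theorem coordRestrict_apply (hL : IsLiftingMap I W L) {x : EuclideanSpace ℝ {i : Fin n // i ∈ I}}
    (hx : x ∈ W.map (coordRestrict I)) : coordRestrict I (L x) = x := by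
  have hmem : coordRestrict I (L x) - x ∈ W.map (coordRestrict I) ⊓ (W.map (coordRestrict I))ᗮ :=
    ⟨sub_mem ⟨L x, hL.mem x, rfl⟩ hx, (hL x).1.2⟩
  rwa [Submodule.inf_orthogonal_eq_bot, Submodule.mem_bot, sub_eq_zero] at hmem

theorem norm_le (hL : IsLiftingMap I W L) {w : EuclideanSpace ℝ (Fin n)} (hw : w ∈ W) :
    ‖L (coordRestrict I w)‖ ≤ ‖w‖ :=
  (hL _).2 w hw (by rw [sub_self]; exact zero_mem _)

theorem apply_eq_zero (hL : IsLiftingMap I W L) {z : EuclideanSpace ℝ {i : Fin n // i ∈ I}}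
    (hz : z ∈ (W.map (coordRestrict I))ᗮ) : L z = 0 := by
  have h := (hL z).2 0 (zero_mem W) (by simpa using neg_mem hz)
  rwa [norm_zero, norm_le_zero_iff] at h

theorem inf_ker_eq_bot (hL : IsLiftingMap I W L) :
    W.map (coordRestrict I) ⊓ LinearMap.ker L = ⊥ := by
  rw [Submodule.eq_bot_iff]
  rintro x ⟨hx, hLx⟩
  rw [← hL.coordRestrict_apply hx, LinearMap.mem_ker.mp hLx, map_zero]

theorem norm_coordRestrict_le {B : Finset (Fin n)} (hBI : B ∪ I = univ) (hdisj : Disjoint B I)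
    (hL : IsLiftingMap I W L) {w : EuclideanSpace ℝ (Fin n)} (hw : w ∈ W) :
    ‖coordRestrict B (L (coordRestrict I w))‖ ≤ ‖coordRestrict B w‖ := by
  have hlift := norm_sq_eq_norm_coordRestrict_sq_add hBI hdisj (L (coordRestrict I w))
  have hsplit := norm_sq_eq_norm_coordRestrict_sq_add hBI hdisj w
  rw [hL.coordRestrict_apply ⟨w, hw, rfl⟩] at hlift
  have := pow_le_pow_left₀ (norm_nonneg _) (hL.norm_le hw) 2
  rw [← pow_le_pow_iff_left₀ (norm_nonneg _) (norm_nonneg _) two_ne_zero]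
  linarith

end IsLiftingMap

section Transfer

variable {n : ℕ} {W : Submodule ℝ (EuclideanSpace ℝ (Fin n))} {B N B' N' : Finset (Fin n)}
  {L : EuclideanSpace ℝ {i : Fin n // i ∈ N} →ₗ[ℝ] EuclideanSpace ℝ (Fin n)}
  {L' : EuclideanSpace ℝ {i : Fin n // i ∈ N'} →ₗ[ℝ] EuclideanSpace ℝ (Fin n)}

theorem IsLiftingMap.exists_lift_subspace (hL : IsLiftingMap N W L) (N' : Finset (Fin n))
    (S : Submodule ℝ (EuclideanSpace ℝ {i : Fin n // i ∈ N})) :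
    ∃ U : Submodule ℝ (EuclideanSpace ℝ (Fin n)),
      finrank ℝ ↥(S ⊓ W.map (coordRestrict N)) ≤ finrank ℝ U + #(N \ N') ∧
      ∀ u ∈ U, coordRestrict N u ∈ S ∧ L (coordRestrict N u) = u ∧
        coordRestrict (N \ N') u = 0 := by
  set V := W.map (coordRestrict N)
  refine ⟨(S ⊓ V).map L ⊓ LinearMap.ker (coordRestrict (N \ N')), ?_, ?_⟩
  · have hinj := Submodule.finrank_map_eq_of_inf_ker_eq_bot (p := S ⊓ V) (f := L)
      (eq_bot_mono (inf_le_inf_right _ inf_le_right) hL.inf_ker_eq_bot)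
    have hker := ((S ⊓ V).map L).finrank_le_finrank_inf_ker_add (coordRestrict (N \ N'))
    rw [finrank_euclideanSpace_finset] at hker
    omega
  · rintro _ ⟨⟨v, ⟨hvS, hvV⟩, rfl⟩, hker⟩
    rw [hL.coordRestrict_apply hvV]
    exact ⟨hvS, rfl, hker⟩

theorem norm_le_norm_add_of_mem_orthogonal {E : Type*} [NormedAddCommGroup E]
    [InnerProductSpace ℝ E] {K : Submodule ℝ E} {x z : E} (hx : x ∈ K) (hz : z ∈ Kᗮ) :
    ‖x‖ ≤ ‖x + z‖ := by
  have h := norm_add_sq_eq_norm_sq_add_norm_sq_real (Submodule.inner_right_of_mem_orthogonal hx hz)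
  rw [mul_self_le_mul_self_iff (norm_nonneg _) (norm_nonneg _), h]
  exact le_add_of_nonneg_right (mul_self_nonneg _)

theorem exists_subspace_stretch_le (hBN : B ∪ N = univ) (hdisj : Disjoint B N)
    (hBN' : B' ∪ N' = univ) (hdisj' : Disjoint B' N')
    (hL : IsLiftingMap N W L) (hL' : IsLiftingMap N' W L') {k : ℕ}
    (hk : k + (#(N \ N') + #(N' \ N)) ≤ #N')
    (S : Submodule ℝ (EuclideanSpace ℝ {i : Fin n // i ∈ N})) (hS : finrank ℝ S = #N - k + 1) :
    ∃ S' : Submodule ℝ (EuclideanSpace ℝ {i : Fin n // i ∈ N'}),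
      finrank ℝ S' = #N' - (k + (#(N \ N') + #(N' \ N))) + 1 ∧
      ∀ a : ℝ, 0 ≤ a → (∀ u ∈ S, ‖(coordRestrict B ∘ₗ L) u‖ ≤ a * ‖u‖) →
        ∀ u ∈ S', ‖(coordRestrict B' ∘ₗ L') u‖ ≤ a * ‖u‖ := by
  obtain ⟨U, hUdim, hU⟩ := hL.exists_lift_subspace N' S
  set V := W.map (coordRestrict N)
  set V' := W.map (coordRestrict N')
  have hUker : U ⊓ LinearMap.ker (coordRestrict N') = ⊥ := by
    rw [Submodule.eq_bot_iff]
    rintro u ⟨hu, hu0⟩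
    obtain ⟨-, hLu, hsdiff⟩ := hU u hu
    rw [← hLu, coordRestrict_eq_zero_of_sdiff hsdiff hu0, map_zero]
  have hUW : U ≤ W := fun u hu => (hU u hu).2.1 ▸ hL.mem _
  set S₁ := U.map (coordRestrict N')
  have hdim : #N' - (k + (#(N \ N') + #(N' \ N))) + 1 ≤ finrank ℝ ↥(S₁ ⊔ V'ᗮ) := by
    have hSV := Submodule.finrank_sup_add_finrank_inf_eq S V
    have hSVle := (S ⊔ V).finrank_le
    have hS₁V' := Submodule.finrank_sup_add_finrank_inf_eq S₁ V'ᗮ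
    rw [eq_bot_mono (inf_le_inf_right _ (Submodule.map_mono hUW)) V'.inf_orthogonal_eq_bot,
      finrank_bot] at hS₁V'
    have hV' := V'.finrank_add_finrank_orthogonal
    have hVV' : finrank ℝ V' ≤ finrank ℝ V + #(N' \ N) := finrank_map_coordRestrict_le W N N'
    have hS₁ : finrank ℝ S₁ = finrank ℝ U := Submodule.finrank_map_eq_of_inf_ker_eq_bot hUker
    have hVN := V.finrank_le
    rw [finrank_euclideanSpace_finset] at hSVle hV' hVN
    omega
  obtain ⟨S', hS'le, hS'⟩ := (S₁ ⊔ V'ᗮ).exists_le_finrank_eq hdim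
  refine ⟨S', hS', fun a ha hSa _ hu => ?_⟩
  obtain ⟨_, ⟨w, hw, rfl⟩, z, hz, rfl⟩ := Submodule.mem_sup.mp (hS'le hu)
  obtain ⟨hwS, hLw, hsdiff⟩ := hU w hw
  have hwB : ‖coordRestrict B w‖ ≤ a * ‖coordRestrict N w‖ := by
    simpa only [LinearMap.comp_apply, hLw] using hSa _ hwS
  calc ‖(coordRestrict B' ∘ₗ L') (coordRestrict N' w + z)‖
      = ‖coordRestrict B' (L' (coordRestrict N' w))‖ := by
        rw [LinearMap.comp_apply, map_add, hL'.apply_eq_zero hz, add_zero]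
    _ ≤ ‖coordRestrict B' w‖ := hL'.norm_coordRestrict_le hBN' hdisj' (hUW hw)
    _ ≤ a * ‖coordRestrict N' w‖ :=
        norm_coordRestrict_le_of_partitions hBN hdisj hBN' hdisj' ha hwB hsdiff
    _ ≤ a * ‖coordRestrict N' w + z‖ :=
        mul_le_mul_of_nonneg_left (norm_le_norm_add_of_mem_orthogonal (Submodule.mem_map_of_mem (hUW hw)) hz) ha

end Transfer

theorem statement19 (n : ℕ)
    (W : Submodule ℝ (EuclideanSpace ℝ (Fin n)))
    (B N B' N' : Finset (Fin n))
    (hBN : B ∪ N = Finset.univ) (hdisj : Disjoint B N)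
    (hBN' : B' ∪ N' = Finset.univ) (hdisj' : Disjoint B' N')
    -- `L` is the lifting map `L_N^W` and `L'` is the lifting map `L_{N'}^W`,
    -- so `ℓ = π_B ∘ L : ℝ^N → ℝ^B` and `ℓ' = π_{B'} ∘ L' : ℝ^{N'} → ℝ^{B'}`
    (L : EuclideanSpace ℝ {i : Fin n // i ∈ N} →ₗ[ℝ] EuclideanSpace ℝ (Fin n))
    (L' : EuclideanSpace ℝ {i : Fin n // i ∈ N'} →ₗ[ℝ] EuclideanSpace ℝ (Fin n))
    (hL : IsLiftingMap N W L) (hL' : IsLiftingMap N' W L') :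
    ∀ i : ℕ, 1 ≤ i →
      singularValue ((coordRestrict B').comp L') (i + (symmDiff N N').card) ≤
        singularValue ((coordRestrict B).comp L) i := by
  intro k hk
  have hsymm : #(symmDiff N N') = #(N \ N') + #(N' \ N) :=
    card_union_of_disjoint disjoint_sdiff_sdiff
  rw [hsymm]
  by_cases hkN' : k + (#(N \ N') + #(N' \ N)) ≤ #N'
  · have hkN : k ≤ #N := by
      have := card_le_card_sdiff_add_card (s := N') (t := N)
      omega
    apply singularValue_le_singularValue_of_forall_exists _ _ hk
    · rwa [finrank_euclideanSpace_finset]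
    · rwa [finrank_euclideanSpace_finset]
    · simp only [finrank_euclideanSpace_finset]
      exact exists_subspace_stretch_le hBN hdisj hBN' hdisj' hL hL' hkN'
  · rw [singularValue_of_finrank_lt _ (by rw [finrank_euclideanSpace_finset]; omega)]
    exact singularValue_nonneg _ _
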